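/- arXiv:2505.09131 — 3 statements merged into one kernel-verified Lean document; each statement's English description precedes it below -/
import Mathlib

section
/- Let X₀, X₁ be random vectors in ℝ^d with joint distribution Q, let π₀, π₁ ≥ 0 with π₀+π₁=1, and let μ₁,…,μ_K ∈ ℝ^d. Then E_Q[π₀ min_k ‖X₀-μ_k‖² + π₁ min_k ‖X₁-μ_k‖²] ≤ E_Q[π₀π₁‖X₀-X₁‖² + min_k ‖π₀X₀+π₁X₁-μ_k‖²]. -/
/-!
For a fixed center `m`, the weighted parallelogram law gives
`π₀ ‖a - m‖² + π₁ ‖b - m‖² = π₀ π₁ ‖a - b‖² + ‖π₀ a + π₁ b - m‖²`.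
Taking `m` to be the center nearest `π₀ a + π₁ b` and bounding each term on the left
from below by the corresponding minimum over all centers gives the inequality pointwise;
averaging against the nonnegative weights preserves it.
-/

theorem weighted_norm_sq_eq {E : Type*} [NormedAddCommGroup E] [InnerProductSpace ℝ E]
    {π₀ π₁ : ℝ} (hsum : π₀ + π₁ = 1) (u v : E) :
    π₀ * ‖u‖ ^ 2 + π₁ * ‖v‖ ^ 2 = π₀ * π₁ * ‖u - v‖ ^ 2 + ‖π₀ • u + π₁ • v‖ ^ 2 := by
  rw [norm_add_sq_real, norm_sub_sq_real, norm_smul, norm_smul, real_inner_smul_left,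
    real_inner_smul_right, Real.norm_eq_abs, Real.norm_eq_abs, mul_pow, mul_pow, sq_abs, sq_abs]
  linear_combination (-(π₀ * ‖u‖ ^ 2 + π₁ * ‖v‖ ^ 2)) * hsum

theorem weighted_norm_sub_sq_eq {E : Type*} [NormedAddCommGroup E] [InnerProductSpace ℝ E]
    {π₀ π₁ : ℝ} (hsum : π₀ + π₁ = 1) (a b m : E) :
    π₀ * ‖a - m‖ ^ 2 + π₁ * ‖b - m‖ ^ 2
      = π₀ * π₁ * ‖a - b‖ ^ 2 + ‖π₀ • a + π₁ • b - m‖ ^ 2 := by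
  have hm : π₀ • a + π₁ • b - m = π₀ • (a - m) + π₁ • (b - m) := by
    linear_combination (norm := module) hsum • m
  rw [hm, weighted_norm_sq_eq hsum, sub_sub_sub_cancel_right]

theorem weighted_inf'_norm_sub_sq_le {E ι : Type*} [NormedAddCommGroup E]
    [InnerProductSpace ℝ E] {s : Finset ι} (hs : s.Nonempty) (μ : ι → E)
    {π₀ π₁ : ℝ} (h₀ : 0 ≤ π₀) (h₁ : 0 ≤ π₁) (hsum : π₀ + π₁ = 1) (a b : E) :
    π₀ * s.inf' hs (fun k => ‖a - μ k‖ ^ 2) + π₁ * s.inf' hs (fun k => ‖b - μ k‖ ^ 2)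
      ≤ π₀ * π₁ * ‖a - b‖ ^ 2 + s.inf' hs (fun k => ‖π₀ • a + π₁ • b - μ k‖ ^ 2) := by
  obtain ⟨k, hk, hk_min⟩ :=
    Finset.exists_mem_eq_inf' hs (fun k => ‖π₀ • a + π₁ • b - μ k‖ ^ 2)
  calc π₀ * s.inf' hs (fun k => ‖a - μ k‖ ^ 2) + π₁ * s.inf' hs (fun k => ‖b - μ k‖ ^ 2)
      ≤ π₀ * ‖a - μ k‖ ^ 2 + π₁ * ‖b - μ k‖ ^ 2 := by
        gcongr <;> exact Finset.inf'_le _ hk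
    _ = π₀ * π₁ * ‖a - b‖ ^ 2 + ‖π₀ • a + π₁ • b - μ k‖ ^ 2 :=
        weighted_norm_sub_sq_eq hsum a b (μ k)
    _ = π₀ * π₁ * ‖a - b‖ ^ 2 + s.inf' hs (fun k => ‖π₀ • a + π₁ • b - μ k‖ ^ 2) := by
        rw [hk_min]

theorem stmt_2_general (d K : ℕ) [NeZero K] (Ω : Type) [Fintype Ω]
    (w : Ω → ℝ) (hw : ∀ ω, 0 ≤ w ω)
    (X₀ X₁ : Ω → EuclideanSpace ℝ (Fin d))
    (π₀ π₁ : ℝ) (h₀ : 0 ≤ π₀) (h₁ : 0 ≤ π₁) (hsum : π₀ + π₁ = 1)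
    (μ : Fin K → EuclideanSpace ℝ (Fin d)) :
    ∑ ω, w ω *
        (π₀ * (Finset.univ.inf' Finset.univ_nonempty fun k => ‖X₀ ω - μ k‖ ^ 2)
          + π₁ * (Finset.univ.inf' Finset.univ_nonempty fun k => ‖X₁ ω - μ k‖ ^ 2))
      ≤ ∑ ω, w ω *
        (π₀ * π₁ * ‖X₀ ω - X₁ ω‖ ^ 2
          + Finset.univ.inf' Finset.univ_nonempty fun k =>
              ‖π₀ • X₀ ω + π₁ • X₁ ω - μ k‖ ^ 2) :=
  Finset.sum_le_sum fun ω _ => mul_le_mul_of_nonneg_left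
    (weighted_inf'_norm_sub_sq_le _ μ h₀ h₁ hsum (X₀ ω) (X₁ ω)) (hw ω)

theorem stmt_2 (d K : ℕ) [NeZero K] (Ω : Type) [Fintype Ω]
    (w : Ω → ℝ) (hw : ∀ ω, 0 ≤ w ω) (hw1 : ∑ ω, w ω = 1)
    (X₀ X₁ : Ω → EuclideanSpace ℝ (Fin d))
    (π₀ π₁ : ℝ) (h₀ : 0 ≤ π₀) (h₁ : 0 ≤ π₁) (hsum : π₀ + π₁ = 1)
    (μ : Fin K → EuclideanSpace ℝ (Fin d)) :
    ∑ ω, w ω *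
        (π₀ * (Finset.univ.inf' Finset.univ_nonempty fun k => ‖X₀ ω - μ k‖ ^ 2)
          + π₁ * (Finset.univ.inf' Finset.univ_nonempty fun k => ‖X₁ ω - μ k‖ ^ 2))
      ≤ ∑ ω, w ω *
        (π₀ * π₁ * ‖X₀ ω - X₁ ω‖ ^ 2
          + Finset.univ.inf' Finset.univ_nonempty fun k =>
              ‖π₀ • X₀ ω + π₁ • X₁ ω - μ k‖ ^ 2) :=
  stmt_2_general d K Ω w hw X₀ X₁ π₀ π₁ h₀ h₁ hsum μ
end

section
/- Suppose assignment functions A₀ : Fin n₀ → (Fin K → ℝ≥0) and A₁ : Fin n₁ → (Fin K → ℝ≥0) satisfy Σ_{k} |(1/n₀)Σ_i A₀(i)_k − (1/n₁)Σ_j A₁(j)_k| ≤ ε, with Σ_k A_s(·)_k = 1. Then for every k with Σ_j A₁(j)_k > 0, |Σ_i A₀(i)_k / Σ_j A₁(j)_k − n₀/n₁| ≤ c·ε where c = (n₀/n₁)·max_k (n₁/Σ_j A₁(j)_k). -/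
theorem stmt_7 (K n₀ n₁ : ℕ) (hn₀ : 0 < n₀) (hn₁ : 0 < n₁) (ε : ℝ) (hε : 0 ≤ ε)
    (A₀ : Fin n₀ → Fin K → ℝ) (A₁ : Fin n₁ → Fin K → ℝ)
    (hA₀_nonneg : ∀ i k, 0 ≤ A₀ i k) (hA₁_nonneg : ∀ j k, 0 ≤ A₁ j k)
    (hA₀_sum : ∀ i, ∑ k, A₀ i k = 1) (hA₁_sum : ∀ j, ∑ k, A₁ j k = 1)
    (hfair : ∑ k, |(1 / (n₀ : ℝ)) * ∑ i, A₀ i k - (1 / (n₁ : ℝ)) * ∑ j, A₁ j k| ≤ ε) :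
    ∀ k : Fin K, 0 < ∑ j, A₁ j k →
      |(∑ i, A₀ i k) / (∑ j, A₁ j k) - (n₀ : ℝ) / n₁|
        ≤ ((n₀ : ℝ) / n₁ *
            Finset.univ.sup' ⟨k, Finset.mem_univ k⟩
              (fun k' => (n₁ : ℝ) / ∑ j, A₁ j k')) * ε := by
  intro k hk
  have hn₀' : (0:ℝ) < n₀ := by exact_mod_cast hn₀
  have hn₁' : (0:ℝ) < n₁ := by exact_mod_cast hn₁
  set S₀ := ∑ i, A₀ i k with hS₀
  set S₁ := ∑ j, A₁ j k with hS₁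
  have hterm : |(1 / (n₀ : ℝ)) * S₀ - (1 / (n₁ : ℝ)) * S₁| ≤ ε := by
    refine le_trans ?_ hfair
    exact Finset.single_le_sum (f := fun k => |(1 / (n₀ : ℝ)) * ∑ i, A₀ i k -
      (1 / (n₁ : ℝ)) * ∑ j, A₁ j k|) (fun _ _ => abs_nonneg _) (Finset.mem_univ k)
  have key : S₀ / S₁ - (n₀ : ℝ) / n₁
      = ((n₀ : ℝ) / S₁) * ((1 / (n₀ : ℝ)) * S₀ - (1 / (n₁ : ℝ)) * S₁) := by
    field_simp
  have hsup : (n₁ : ℝ) / S₁ ≤ Finset.univ.sup' ⟨k, Finset.mem_univ k⟩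
      (fun k' => (n₁ : ℝ) / ∑ j, A₁ j k') :=
    Finset.le_sup' (fun k' => (n₁ : ℝ) / ∑ j, A₁ j k') (Finset.mem_univ k)
  calc |S₀ / S₁ - (n₀ : ℝ) / n₁|
      = ((n₀ : ℝ) / S₁) * |(1 / (n₀ : ℝ)) * S₀ - (1 / (n₁ : ℝ)) * S₁| := by
        rw [key, abs_mul, abs_of_pos (div_pos hn₀' hk)]
    _ ≤ ((n₀ : ℝ) / S₁) * ε := by
        exact mul_le_mul_of_nonneg_left hterm (le_of_lt (div_pos hn₀' hk))
    _ = ((n₀ : ℝ) / n₁ * ((n₁ : ℝ) / S₁)) * ε := by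
        field_simp
    _ ≤ ((n₀ : ℝ) / n₁ *
          Finset.univ.sup' ⟨k, Finset.mem_univ k⟩
            (fun k' => (n₁ : ℝ) / ∑ j, A₁ j k')) * ε := by
        apply mul_le_mul_of_nonneg_right _ hε
        exact mul_le_mul_of_nonneg_left hsup (le_of_lt (div_pos hn₀' hn₁'))
end

section
/- Let P₀ and P₁ be the empirical distributions on finite sets X₀ and X₁, and let A₀, A₁ be probabilistic assignment functions with E₀[A₀(X)_k] = E₁[A₁(X)_k] =: C_k for all k (perfect fairness), with C_k > 0. Define Q({x₀,x₁}) := Σ_k (A₀(x₀)_k·A₁(x₁)_k / C_k)·P₀({x₀})·P₁({x₁}). Then Q is a valid joint distribution whose marginals are P₀ and P₁. -/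
theorem stmt_11 (K n₀ n₁ : ℕ) (hn₀ : 0 < n₀) (hn₁ : 0 < n₁)
    (A₀ : Fin n₀ → Fin K → ℝ) (A₁ : Fin n₁ → Fin K → ℝ)
    (hA₀_nonneg : ∀ i k, 0 ≤ A₀ i k) (hA₁_nonneg : ∀ j k, 0 ≤ A₁ j k)
    (hA₀_sum : ∀ i, ∑ k, A₀ i k = 1) (hA₁_sum : ∀ j, ∑ k, A₁ j k = 1)
    (C : Fin K → ℝ) (hC_pos : ∀ k, 0 < C k)
    (hC₀ : ∀ k, (1 / (n₀ : ℝ)) * ∑ i, A₀ i k = C k)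
    (hC₁ : ∀ k, (1 / (n₁ : ℝ)) * ∑ j, A₁ j k = C k)
    (Q : Fin n₀ → Fin n₁ → ℝ)
    (hQ : ∀ i j, Q i j = ∑ k, (A₀ i k * A₁ j k / C k) * (1 / (n₀ : ℝ)) * (1 / (n₁ : ℝ))) :
    (∀ i j, 0 ≤ Q i j)
    ∧ (∀ i, ∑ j, Q i j = 1 / (n₀ : ℝ))
    ∧ (∀ j, ∑ i, Q i j = 1 / (n₁ : ℝ)) := by
  have hn₀' : (0:ℝ) < n₀ := by exact_mod_cast hn₀
  have hn₁' : (0:ℝ) < n₁ := by exact_mod_cast hn₁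
  refine ⟨?_, ?_, ?_⟩
  · intro i j
    rw [hQ]
    apply Finset.sum_nonneg
    intro k _
    exact mul_nonneg (mul_nonneg (div_nonneg (mul_nonneg (hA₀_nonneg i k) (hA₁_nonneg j k))
      (hC_pos k).le) (by positivity)) (by positivity)
  · intro i
    have key : ∑ j, Q i j = ∑ k, (A₀ i k / C k) * (1 / (n₀:ℝ)) * ((1 / (n₁:ℝ)) * ∑ j, A₁ j k) := by
      simp only [hQ]
      rw [Finset.sum_comm]
      refine Finset.sum_congr rfl fun k _ => ?_
      simp only [Finset.mul_sum]
      apply Finset.sum_congr rfl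
      intro j _
      ring
    rw [key]
    have h2 : ∀ k, (A₀ i k / C k) * (1 / (n₀:ℝ)) * ((1 / (n₁:ℝ)) * ∑ j, A₁ j k)
        = A₀ i k * (1 / (n₀:ℝ)) := by
      intro k
      have hc : C k ≠ 0 := (hC_pos k).ne'
      have hn : (n₀:ℝ) ≠ 0 := hn₀'.ne'
      rw [hC₁ k]
      field_simp
    simp_rw [h2, ← Finset.sum_mul, hA₀_sum i, one_mul]
  · intro j
    have key : ∑ i, Q i j = ∑ k, (A₁ j k / C k) * (1 / (n₁:ℝ)) * ((1 / (n₀:ℝ)) * ∑ i, A₀ i k) := by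
      simp only [hQ]
      rw [Finset.sum_comm]
      refine Finset.sum_congr rfl fun k _ => ?_
      simp only [Finset.mul_sum]
      apply Finset.sum_congr rfl
      intro i _
      ring
    rw [key]
    have h2 : ∀ k, (A₁ j k / C k) * (1 / (n₁:ℝ)) * ((1 / (n₀:ℝ)) * ∑ i, A₀ i k)
        = A₁ j k * (1 / (n₁:ℝ)) := by
      intro k
      have hc : C k ≠ 0 := (hC_pos k).ne'
      have hn : (n₁:ℝ) ≠ 0 := hn₁'.ne'
      rw [hC₀ k]
      field_simp
    simp_rw [h2, ← Finset.sum_mul, hA₁_sum j, one_mul]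
end
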